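/- arXiv:0710.3078 — 3 statements merged into one kernel-verified Lean document; each statement's English description precedes it below -/
import Mathlib

section
/- The operator T_i = c_i(x)·s_i - d_i(x), where d_i(x) = c_i(x) - χ_i, acting on polynomials in n variables, satisfies T_i² = t_i² · id for i ∈ {0,n} and T_i² = id for i ∈ {1,...,n-1}. -/
/-!
If `s` is an involution and `c x + c (s x) = 2χ`, then expanding `T² f (x)` gives
`c x · c (s x) + (c x - χ)²` times `f x` plus `-c x · (c x + c (s x) - 2χ)` times `f (s x)`,
i.e. `χ² f x`. For each of the three reflections the rational function `c` satisfies this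
because `a_i (s_i x) = -a_i x`.
-/

noncomputable section

/-- The difference-reflection operator T = c(x)·s − d(x), d = c − χ. -/
def TRefl {n : ℕ} (c : (Fin n → ℂ) → ℂ) (χ : ℂ) (s : (Fin n → ℂ) → (Fin n → ℂ))
    (f : (Fin n → ℂ) → ℂ) : (Fin n → ℂ) → ℂ :=
  fun x => c x * f (s x) - (c x - χ) * f x

open Function

theorem TRefl_TRefl_of_involutive {n : ℕ} (c : (Fin n → ℂ) → ℂ) (χ : ℂ)
    {s : (Fin n → ℂ) → (Fin n → ℂ)} (hs : Involutive s) (f : (Fin n → ℂ) → ℂ)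
    {x : Fin n → ℂ} (hc : c x + c (s x) = 2 * χ) :
    TRefl c χ s (TRefl c χ s f) x = χ ^ 2 * f x := by
  simp only [TRefl, hs x]
  linear_combination (c x * f x - c x * f (s x)) * hc

theorem involutive_update_self_apply {ι α : Type*} [DecidableEq ι] (i : ι) {g : α → α}
    (hg : Involutive g) : Involutive fun y : ι → α => update y i (g (y i)) := by
  intro y
  simp [hg (y i)]

theorem involutive_comp_swap {ι α : Type*} [DecidableEq ι] (i j : ι) :
    Involutive fun y : ι → α => y ∘ Equiv.swap i j := by
  intro y
  ext k
  simp

/-- T_i² = t_i²·id for i = 0, n and T_i² = id for the middle indices, acting on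
(evaluations of) polynomials in n variables, at points where a_i(x) ≠ 0. -/
theorem stmt4 (n : ℕ) (hn : 0 < n) (t0 u0 t tn un : ℂ) (p : MvPolynomial (Fin n) ℂ) :
    -- i = 0 : c₀(x) = (t₀+u₀+(1-2x₁)/2)(t₀-u₀+(1-2x₁)/2)/(1-2x₁), s₀ x₁ = 1-x₁, χ₀ = t₀
    (∀ x : Fin n → ℂ, 1 - 2 * x ⟨0, hn⟩ ≠ 0 →
      TRefl (fun y => (t0 + u0 + (1 - 2 * y ⟨0, hn⟩) / 2) * (t0 - u0 + (1 - 2 * y ⟨0, hn⟩) / 2)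
            / (1 - 2 * y ⟨0, hn⟩)) t0
          (fun y => Function.update y ⟨0, hn⟩ (1 - y ⟨0, hn⟩))
        (TRefl (fun y => (t0 + u0 + (1 - 2 * y ⟨0, hn⟩) / 2) * (t0 - u0 + (1 - 2 * y ⟨0, hn⟩) / 2)
            / (1 - 2 * y ⟨0, hn⟩)) t0
          (fun y => Function.update y ⟨0, hn⟩ (1 - y ⟨0, hn⟩))
          (fun y => MvPolynomial.eval y p)) x
      = t0 ^ 2 * MvPolynomial.eval x p) ∧
    -- 1 ≤ i ≤ n-1 : c_i(x) = (t + x_i - x_{i+1})/(x_i - x_{i+1}), s_i swaps x_i, x_{i+1}, χ_i = 1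
    (∀ i j : Fin n, (i : ℕ) + 1 = (j : ℕ) → ∀ x : Fin n → ℂ, x i ≠ x j →
      TRefl (fun y => (t + (y i - y j)) / (y i - y j)) 1 (fun y => y ∘ Equiv.swap i j)
        (TRefl (fun y => (t + (y i - y j)) / (y i - y j)) 1 (fun y => y ∘ Equiv.swap i j)
          (fun y => MvPolynomial.eval y p)) x
      = MvPolynomial.eval x p) ∧
    -- i = n : cₙ(x) = (tₙ+uₙ+xₙ)(tₙ-uₙ+xₙ)/(2xₙ), sₙ negates xₙ, χₙ = tₙ
    (∀ x : Fin n → ℂ, x ⟨n - 1, by omega⟩ ≠ 0 →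
      TRefl (fun y => (tn + un + y ⟨n - 1, by omega⟩) * (tn - un + y ⟨n - 1, by omega⟩)
            / (2 * y ⟨n - 1, by omega⟩)) tn
          (fun y => Function.update y ⟨n - 1, by omega⟩ (-(y ⟨n - 1, by omega⟩)))
        (TRefl (fun y => (tn + un + y ⟨n - 1, by omega⟩) * (tn - un + y ⟨n - 1, by omega⟩)
            / (2 * y ⟨n - 1, by omega⟩)) tn
          (fun y => Function.update y ⟨n - 1, by omega⟩ (-(y ⟨n - 1, by omega⟩)))
          (fun y => MvPolynomial.eval y p)) x
      = tn ^ 2 * MvPolynomial.eval x p) := by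
  refine ⟨fun x hx => ?_, fun i j _ x hx => ?_, fun x hx => ?_⟩
  · refine TRefl_TRefl_of_involutive _ _
      (involutive_update_self_apply _ fun a => sub_sub_cancel 1 a) _ ?_
    have hx' : 1 - 2 * (1 - x ⟨0, hn⟩) ≠ 0 := by contrapose! hx; linear_combination -hx
    simp only [update_self]
    field_simp
    ring
  · have hx' : x i - x j ≠ 0 := sub_ne_zero.mpr hx
    rw [TRefl_TRefl_of_involutive _ _ (involutive_comp_swap i j) _ ?_, one_pow, one_mul]
    simp only [comp_apply, Equiv.swap_apply_left, Equiv.swap_apply_right]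
    field_simp
    ring
  · refine TRefl_TRefl_of_involutive _ _ (involutive_update_self_apply _ neg_involutive) _ ?_
    simp only [update_self]
    field_simp
    ring
end
end

section
/- Verify in the operator algebra the deformed braid relation: if T₀ and T₁ are the difference-reflection operators of the polynomial representation (n ≥ 2), then T₀T₁T₀T₁ + t·T₀T₁ = T₁T₀T₁T₀ + t·T₁T₀ as operators on ℂ[x₁,...,xₙ]. -/
noncomputable section

/-- s₀ : x₁ ↦ 1 − x₁. -/
def s0m (n : ℕ) (hn : 2 ≤ n) (x : Fin n → ℂ) : Fin n → ℂ :=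
  Function.update x ⟨0, by omega⟩ (1 - x ⟨0, by omega⟩)

/-- s₁ : swaps x₁ and x₂. -/
def s1m (n : ℕ) (hn : 2 ≤ n) (x : Fin n → ℂ) : Fin n → ℂ :=
  x ∘ Equiv.swap (⟨0, by omega⟩ : Fin n) ⟨1, by omega⟩

/-- T₀ = c₀(x) s₀ − (c₀(x) − t₀), c₀(x) = (t₀+u₀+(1−2x₁)/2)(t₀−u₀+(1−2x₁)/2)/(1−2x₁). -/
def T0m (n : ℕ) (hn : 2 ≤ n) (t0 u0 : ℂ) (f : (Fin n → ℂ) → ℂ) : (Fin n → ℂ) → ℂ :=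
  fun x =>
    ((t0 + u0 + (1 - 2 * x ⟨0, by omega⟩) / 2) * (t0 - u0 + (1 - 2 * x ⟨0, by omega⟩) / 2)
        / (1 - 2 * x ⟨0, by omega⟩)) * f (s0m n hn x)
      - ((t0 + u0 + (1 - 2 * x ⟨0, by omega⟩) / 2) * (t0 - u0 + (1 - 2 * x ⟨0, by omega⟩) / 2)
        / (1 - 2 * x ⟨0, by omega⟩) - t0) * f x

/-- T₁ = c₁(x) s₁ − (c₁(x) − 1), c₁(x) = (t + x₁ − x₂)/(x₁ − x₂). -/
def T1m (n : ℕ) (hn : 2 ≤ n) (t : ℂ) (f : (Fin n → ℂ) → ℂ) : (Fin n → ℂ) → ℂ :=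
  fun x =>
    ((t + x ⟨0, by omega⟩ - x ⟨1, by omega⟩) / (x ⟨0, by omega⟩ - x ⟨1, by omega⟩)) * f (s1m n hn x)
      - ((t + x ⟨0, by omega⟩ - x ⟨1, by omega⟩) / (x ⟨0, by omega⟩ - x ⟨1, by omega⟩) - 1) * f x

lemma s0m_apply0 (n : ℕ) (hn : 2 ≤ n) (x : Fin n → ℂ) :
    s0m n hn x ⟨0, by omega⟩ = 1 - x ⟨0, by omega⟩ := by
  simp [s0m]

lemma s0m_apply1 (n : ℕ) (hn : 2 ≤ n) (x : Fin n → ℂ) :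
    s0m n hn x ⟨1, by omega⟩ = x ⟨1, by omega⟩ := by
  simp [s0m, Function.update]

lemma s1m_apply0 (n : ℕ) (hn : 2 ≤ n) (x : Fin n → ℂ) :
    s1m n hn x ⟨0, by omega⟩ = x ⟨1, by omega⟩ := by
  simp [s1m]

lemma s1m_apply1 (n : ℕ) (hn : 2 ≤ n) (x : Fin n → ℂ) :
    s1m n hn x ⟨1, by omega⟩ = x ⟨0, by omega⟩ := by
  simp [s1m]

lemma s0m_invol (n : ℕ) (hn : 2 ≤ n) (x : Fin n → ℂ) :
    s0m n hn (s0m n hn x) = x := by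
  funext i
  rcases eq_or_ne i ⟨0, by omega⟩ with h | h
  · subst h; rw [s0m_apply0, s0m_apply0]; ring
  · simp [s0m, Function.update_of_ne h]

lemma s1m_invol (n : ℕ) (hn : 2 ≤ n) (x : Fin n → ℂ) :
    s1m n hn (s1m n hn x) = x := by
  funext i; simp [s1m]

lemma braidm (n : ℕ) (hn : 2 ≤ n) (x : Fin n → ℂ) :
    s0m n hn (s1m n hn (s0m n hn (s1m n hn x)))
      = s1m n hn (s0m n hn (s1m n hn (s0m n hn x))) := by
  funext i
  by_cases h0 : i = (⟨0, by omega⟩ : Fin n)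
  · subst h0
    rw [s0m_apply0, s1m_apply0, s0m_apply1, s1m_apply1,
        s1m_apply0, s0m_apply1, s1m_apply1, s0m_apply0]
  · by_cases h1 : i = (⟨1, by omega⟩ : Fin n)
    · subst h1
      rw [s0m_apply1, s1m_apply1, s0m_apply0, s1m_apply0,
          s1m_apply1, s0m_apply0, s1m_apply0, s0m_apply1]
    · have e0 : ∀ y : Fin n → ℂ, s0m n hn y i = y i := fun y =>
        Function.update_of_ne h0 _ _
      have e1 : ∀ y : Fin n → ℂ, s1m n hn y i = y i := fun y => by
        simp [s1m, Equiv.swap_apply_of_ne_of_ne h0 h1]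
      rw [e0, e1, e0, e1, e1, e0, e1, e0]

set_option maxHeartbeats 1000000 in
lemma corem (t0 u0 t a b F0 F1 F2 F3 F4 F5 F6 F7 : ℂ)
    (h0a : 1 - 2 * a ≠ 0) (h1a : 1 - 2 * (1 - a) ≠ 0)
    (h2a : 1 - 2 * b ≠ 0) (h3a : 1 - 2 * (1 - b) ≠ 0)
    (h0c : a - b ≠ 0) (h1c : 1 - a - b ≠ 0) (h2c : b - a ≠ 0) (h3c : 1 - b - a ≠ 0)
    (h4c : b - (1 - a) ≠ 0) (h5c : 1 - b - (1 - a) ≠ 0) :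
    (t0 + u0 + (1 - 2 * a) / 2) * (t0 - u0 + (1 - 2 * a) / 2) / (1 - 2 * a) *
          ((t + (1 - a) - b) / (1 - a - b) *
              ((t0 + u0 + (1 - 2 * b) / 2) * (t0 - u0 + (1 - 2 * b) / 2) / (1 - 2 * b) *
                  ((t + (1 - b) - (1 - a)) / (1 - b - (1 - a)) *
                      F7 -
                    ((t + (1 - b) - (1 - a)) / (1 - b - (1 - a)) - 1) *
                      F5) -
                ((t0 + u0 + (1 - 2 * b) / 2) * (t0 - u0 + (1 - 2 * b) / 2) / (1 - 2 * b) - t0) *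
                  ((t + b - (1 - a)) / (b - (1 - a)) * F1 -
                    ((t + b - (1 - a)) / (b - (1 - a)) - 1) * F3)) -
            ((t + (1 - a) - b) / (1 - a - b) - 1) *
              ((t0 + u0 + (1 - 2 * (1 - a)) / 2) * (t0 - u0 + (1 - 2 * (1 - a)) / 2) /
                    (1 - 2 * (1 - a)) *
                  ((t + a - b) / (a - b) * F2 -
                    ((t + a - b) / (a - b) - 1) * F0) -
                ((t0 + u0 + (1 - 2 * (1 - a)) / 2) * (t0 - u0 + (1 - 2 * (1 - a)) / 2) /
                      (1 - 2 * (1 - a)) -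
                    t0) *
                  ((t + (1 - a) - b) / (1 - a - b) * F3 -
                    ((t + (1 - a) - b) / (1 - a - b) - 1) * F1))) -
        ((t0 + u0 + (1 - 2 * a) / 2) * (t0 - u0 + (1 - 2 * a) / 2) / (1 - 2 * a) - t0) *
          ((t + a - b) / (a - b) *
              ((t0 + u0 + (1 - 2 * b) / 2) * (t0 - u0 + (1 - 2 * b) / 2) / (1 - 2 * b) *
                  ((t + (1 - b) - a) / (1 - b - a) * F6 -
                    ((t + (1 - b) - a) / (1 - b - a) - 1) * F4) -
                ((t0 + u0 + (1 - 2 * b) / 2) * (t0 - u0 + (1 - 2 * b) / 2) / (1 - 2 * b) - t0) *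
                  ((t + b - a) / (b - a) * F0 -
                    ((t + b - a) / (b - a) - 1) * F2)) -
            ((t + a - b) / (a - b) - 1) *
              ((t0 + u0 + (1 - 2 * a) / 2) * (t0 - u0 + (1 - 2 * a) / 2) / (1 - 2 * a) *
                  ((t + (1 - a) - b) / (1 - a - b) * F3 -
                    ((t + (1 - a) - b) / (1 - a - b) - 1) * F1) -
                ((t0 + u0 + (1 - 2 * a) / 2) * (t0 - u0 + (1 - 2 * a) / 2) / (1 - 2 * a) - t0) *
                  ((t + a - b) / (a - b) * F2 -
                    ((t + a - b) / (a - b) - 1) * F0))) +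
      t *
        ((t0 + u0 + (1 - 2 * a) / 2) * (t0 - u0 + (1 - 2 * a) / 2) / (1 - 2 * a) *
            ((t + (1 - a) - b) / (1 - a - b) * F3 -
              ((t + (1 - a) - b) / (1 - a - b) - 1) * F1) -
          ((t0 + u0 + (1 - 2 * a) / 2) * (t0 - u0 + (1 - 2 * a) / 2) / (1 - 2 * a) - t0) *
            ((t + a - b) / (a - b) * F2 -
              ((t + a - b) / (a - b) - 1) * F0)) =
    (t + a - b) / (a - b) *
          ((t0 + u0 + (1 - 2 * b) / 2) * (t0 - u0 + (1 - 2 * b) / 2) / (1 - 2 * b) *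
              ((t + (1 - b) - a) / (1 - b - a) *
                  ((t0 + u0 + (1 - 2 * a) / 2) * (t0 - u0 + (1 - 2 * a) / 2) / (1 - 2 * a) *
                      F7 -
                    ((t0 + u0 + (1 - 2 * a) / 2) * (t0 - u0 + (1 - 2 * a) / 2) / (1 - 2 * a) -
                        t0) *
                      F6) -
                ((t + (1 - b) - a) / (1 - b - a) - 1) *
                  ((t0 + u0 + (1 - 2 * (1 - b)) / 2) * (t0 - u0 + (1 - 2 * (1 - b)) / 2) /
                        (1 - 2 * (1 - b)) *
                      F2 -
                    ((t0 + u0 + (1 - 2 * (1 - b)) / 2) * (t0 - u0 + (1 - 2 * (1 - b)) / 2) /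
                          (1 - 2 * (1 - b)) -
                        t0) *
                      F4)) -
            ((t0 + u0 + (1 - 2 * b) / 2) * (t0 - u0 + (1 - 2 * b) / 2) / (1 - 2 * b) - t0) *
              ((t + b - a) / (b - a) *
                  ((t0 + u0 + (1 - 2 * a) / 2) * (t0 - u0 + (1 - 2 * a) / 2) / (1 - 2 * a) *
                      F1 -
                    ((t0 + u0 + (1 - 2 * a) / 2) * (t0 - u0 + (1 - 2 * a) / 2) / (1 - 2 * a) -
                        t0) *
                      F0) -
                ((t + b - a) / (b - a) - 1) *
                  ((t0 + u0 + (1 - 2 * b) / 2) * (t0 - u0 + (1 - 2 * b) / 2) / (1 - 2 * b) *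
                      F4 -
                    ((t0 + u0 + (1 - 2 * b) / 2) * (t0 - u0 + (1 - 2 * b) / 2) / (1 - 2 * b) -
                        t0) *
                      F2))) -
        ((t + a - b) / (a - b) - 1) *
          ((t0 + u0 + (1 - 2 * a) / 2) * (t0 - u0 + (1 - 2 * a) / 2) / (1 - 2 * a) *
              ((t + (1 - a) - b) / (1 - a - b) *
                  ((t0 + u0 + (1 - 2 * b) / 2) * (t0 - u0 + (1 - 2 * b) / 2) / (1 - 2 * b) *
                      F5 -
                    ((t0 + u0 + (1 - 2 * b) / 2) * (t0 - u0 + (1 - 2 * b) / 2) / (1 - 2 * b) -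
                        t0) *
                      F3) -
                ((t + (1 - a) - b) / (1 - a - b) - 1) *
                  ((t0 + u0 + (1 - 2 * (1 - a)) / 2) * (t0 - u0 + (1 - 2 * (1 - a)) / 2) /
                        (1 - 2 * (1 - a)) *
                      F0 -
                    ((t0 + u0 + (1 - 2 * (1 - a)) / 2) * (t0 - u0 + (1 - 2 * (1 - a)) / 2) /
                          (1 - 2 * (1 - a)) -
                        t0) *
                      F1)) -
            ((t0 + u0 + (1 - 2 * a) / 2) * (t0 - u0 + (1 - 2 * a) / 2) / (1 - 2 * a) - t0) *
              ((t + a - b) / (a - b) *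
                  ((t0 + u0 + (1 - 2 * b) / 2) * (t0 - u0 + (1 - 2 * b) / 2) / (1 - 2 * b) *
                      F4 -
                    ((t0 + u0 + (1 - 2 * b) / 2) * (t0 - u0 + (1 - 2 * b) / 2) / (1 - 2 * b) -
                        t0) *
                      F2) -
                ((t + a - b) / (a - b) - 1) *
                  ((t0 + u0 + (1 - 2 * a) / 2) * (t0 - u0 + (1 - 2 * a) / 2) / (1 - 2 * a) *
                      F1 -
                    ((t0 + u0 + (1 - 2 * a) / 2) * (t0 - u0 + (1 - 2 * a) / 2) / (1 - 2 * a) -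
                        t0) *
                      F0))) +
      t *
        ((t + a - b) / (a - b) *
            ((t0 + u0 + (1 - 2 * b) / 2) * (t0 - u0 + (1 - 2 * b) / 2) / (1 - 2 * b) *
                F4 -
              ((t0 + u0 + (1 - 2 * b) / 2) * (t0 - u0 + (1 - 2 * b) / 2) / (1 - 2 * b) - t0) *
                F2) -
          ((t + a - b) / (a - b) - 1) *
            ((t0 + u0 + (1 - 2 * a) / 2) * (t0 - u0 + (1 - 2 * a) / 2) / (1 - 2 * a) *
                F1 -
              ((t0 + u0 + (1 - 2 * a) / 2) * (t0 - u0 + (1 - 2 * a) / 2) / (1 - 2 * a) - t0) *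
                F0)) := by
  obtain ⟨A0, hA0⟩ : ∃ y : ℂ, y = (t0 + u0 + (1 - 2 * a) / 2) * (t0 - u0 + (1 - 2 * a) / 2) / (1 - 2 * a) := ⟨_, rfl⟩
  rw [← hA0]
  obtain ⟨A1, hA1⟩ : ∃ y : ℂ, y = (t0 + u0 + (1 - 2 * (1 - a)) / 2) * (t0 - u0 + (1 - 2 * (1 - a)) / 2) / (1 - 2 * (1 - a)) := ⟨_, rfl⟩
  rw [← hA1]
  obtain ⟨A2, hA2⟩ : ∃ y : ℂ, y = (t0 + u0 + (1 - 2 * b) / 2) * (t0 - u0 + (1 - 2 * b) / 2) / (1 - 2 * b) := ⟨_, rfl⟩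
  rw [← hA2]
  obtain ⟨A3, hA3⟩ : ∃ y : ℂ, y = (t0 + u0 + (1 - 2 * (1 - b)) / 2) * (t0 - u0 + (1 - 2 * (1 - b)) / 2) / (1 - 2 * (1 - b)) := ⟨_, rfl⟩
  rw [← hA3]
  obtain ⟨B0, hB0⟩ : ∃ y : ℂ, y = (t + (1 - a) - b) / (1 - a - b) := ⟨_, rfl⟩
  rw [← hB0]
  obtain ⟨B1, hB1⟩ : ∃ y : ℂ, y = (t + (1 - b) - (1 - a)) / (1 - b - (1 - a)) := ⟨_, rfl⟩
  rw [← hB1]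
  obtain ⟨B2, hB2⟩ : ∃ y : ℂ, y = (t + b - (1 - a)) / (b - (1 - a)) := ⟨_, rfl⟩
  rw [← hB2]
  obtain ⟨B3, hB3⟩ : ∃ y : ℂ, y = (t + a - b) / (a - b) := ⟨_, rfl⟩
  rw [← hB3]
  obtain ⟨B4, hB4⟩ : ∃ y : ℂ, y = (t + (1 - b) - a) / (1 - b - a) := ⟨_, rfl⟩
  rw [← hB4]
  obtain ⟨B5, hB5⟩ : ∃ y : ℂ, y = (t + b - a) / (b - a) := ⟨_, rfl⟩
  rw [← hB5]
  have hr1 : A1 = 2 * t0 - A0 := by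
    rw [hA1, hA0]; field_simp; ring
  have hr2 : A3 = 2 * t0 - A2 := by
    rw [hA3, hA2]; field_simp; ring
  have hr3 : B1 = B3 := by
    rw [hB1, hB3]; field_simp; ring
  have hr4 : B4 = B0 := by
    rw [hB4, hB0]; field_simp; ring
  have hr5 : B2 = 2 - B0 := by
    rw [hB2, hB0]; field_simp; ring
  have hr6 : B5 = 2 - B3 := by
    rw [hB5, hB3]; field_simp; ring
  have hd : (B0 - 1) * (A0 + A2 - 2 * t0) + (B3 - 1) * (A2 - A0) = t := by
    rw [hB0, hB3, hA0, hA2]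
    rw [div_sub_one h1c, div_sub_one h0c]
    have e1 : t + (1 - a) - b - (1 - a - b) = t := by ring
    have e2 : t + a - b - (a - b) = t := by ring
    rw [e1, e2]
    rw [div_mul_eq_mul_div, div_mul_eq_mul_div, div_add_div _ _ h1c h0c]
    rw [div_eq_iff (mul_ne_zero h1c h0c)]
    field_simp
    ring
  have hF0 : A0 * (B0 - 1) * A1 * (B3 - 1) + (A0 - t0) * B3 * (A2 - t0) * B5 + (A0 - t0) * (B3 - 1) * (A0 - t0) * (B3 - 1) + t * (A0 - t0) * (B3 - 1) = B3 * (A2 - t0) * B5 * (A0 - t0) + (B3 - 1) * A0 * (B0 - 1) * A1 + (B3 - 1) * (A0 - t0) * (B3 - 1) * (A0 - t0) + t * (B3 - 1) * (A0 - t0) := by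
    simp only [hr1, hr2, hr3, hr4, hr5, hr6]
    ring
  have hF1 : -A0 * B0 * (A2 - t0) * B2 - A0 * (B0 - 1) * (A1 - t0) * (B0 - 1) - (A0 - t0) * (B3 - 1) * A0 * (B0 - 1) - t * A0 * (B0 - 1) = -B3 * (A2 - t0) * B5 * A0 - (B3 - 1) * A0 * (B0 - 1) * (A1 - t0) - (B3 - 1) * (A0 - t0) * (B3 - 1) * A0 - t * (B3 - 1) * A0 := by
    simp only [hr1, hr2, hr3, hr4, hr5, hr6]
    linear_combination (-1 * A0 * B3 + A0 * B0) * hd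
  have hF2 : -A0 * (B0 - 1) * A1 * B3 - (A0 - t0) * B3 * (A2 - t0) * (B5 - 1) - (A0 - t0) * (B3 - 1) * (A0 - t0) * B3 - t * (A0 - t0) * B3 = -B3 * A2 * (B4 - 1) * A3 - B3 * (A2 - t0) * (B5 - 1) * (A2 - t0) - (B3 - 1) * (A0 - t0) * B3 * (A2 - t0) - t * B3 * (A2 - t0) := by
    simp only [hr1, hr2, hr3, hr4, hr5, hr6]
    linear_combination (-1 * A2 * B3 + A0 * B3) * hd
  have hF3 : A0 * B0 * (A2 - t0) * (B2 - 1) + A0 * (B0 - 1) * (A1 - t0) * B0 + (A0 - t0) * (B3 - 1) * A0 * B0 + t * A0 * B0 = (B3 - 1) * A0 * B0 * (A2 - t0) := by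
    simp only [hr1, hr2, hr3, hr4, hr5, hr6]
    linear_combination (-1 * A0 * B0) * hd
  have hF4 : (A0 - t0) * B3 * A2 * (B4 - 1) = B3 * A2 * (B4 - 1) * (A3 - t0) + B3 * (A2 - t0) * (B5 - 1) * A2 + (B3 - 1) * (A0 - t0) * B3 * A2 + t * B3 * A2 := by
    simp only [hr1, hr2, hr3, hr4, hr5, hr6]
    linear_combination (A2 * B3) * hd
  have hF5 : -A0 * B0 * A2 * (B1 - 1) = -(B3 - 1) * A0 * B0 * A2 := by
    simp only [hr1, hr2, hr3, hr4, hr5, hr6]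
    ring
  have hF6 : -(A0 - t0) * B3 * A2 * B4 = -B3 * A2 * B4 * (A0 - t0) := by
    simp only [hr1, hr2, hr3, hr4, hr5, hr6]
    ring
  have hF7 : A0 * B0 * A2 * B1 = B3 * A2 * B4 * A0 := by
    simp only [hr1, hr2, hr3, hr4, hr5, hr6]
    ring
  linear_combination F0 * hF0 + F1 * hF1 + F2 * hF2 + F3 * hF3 + F4 * hF4
    + F5 * hF5 + F6 * hF6 + F7 * hF7

/-- Points of the ⟨s₀,s₁⟩-orbit of x reached by words in s₀, s₁. -/
def orb (n : ℕ) (hn : 2 ≤ n) (l : List Bool) (x : Fin n → ℂ) : Fin n → ℂ :=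
  l.foldr (fun b y => if b then s0m n hn y else s1m n hn y) x

set_option maxHeartbeats 1000000 in
/-- The deformed braid relation T₀T₁T₀T₁ + t·T₀T₁ = T₁T₀T₁T₀ + t·T₁T₀ as operators
on functions of n complex variables (at generic points). -/
theorem stmt10 (n : ℕ) (hn : 2 ≤ n) (t0 u0 t : ℂ)
    (f : (Fin n → ℂ) → ℂ) (x : Fin n → ℂ)
    (hx : ∀ l : List Bool, l.length ≤ 4 →
      1 - 2 * orb n hn l x ⟨0, by omega⟩ ≠ 0 ∧
      orb n hn l x ⟨0, by omega⟩ ≠ orb n hn l x ⟨1, by omega⟩) :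
    T0m n hn t0 u0 (T1m n hn t (T0m n hn t0 u0 (T1m n hn t f))) x
        + t * T0m n hn t0 u0 (T1m n hn t f) x
      = T1m n hn t (T0m n hn t0 u0 (T1m n hn t (T0m n hn t0 u0 f))) x
        + t * T1m n hn t (T0m n hn t0 u0 f) x := by
  have h0 := hx [] (by simp)
  have h1 := hx [true] (by simp)
  have h2 := hx [false] (by simp)
  have h3 := hx [true, false] (by simp)
  have h4 := hx [false, true] (by simp)
  have h5 := hx [true, false, true] (by simp)
  simp only [orb, List.foldr, if_true, if_false, Bool.false_eq_true, ite_true, ite_false,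
    s0m_apply0, s0m_apply1, s1m_apply0, s1m_apply1, sub_sub_cancel] at h0 h1 h2 h3 h4 h5
  obtain ⟨h0a, h0b⟩ := h0
  obtain ⟨h1a, h1b⟩ := h1
  obtain ⟨h2a, h2b⟩ := h2
  obtain ⟨h3a, h3b⟩ := h3
  obtain ⟨h4a, h4b⟩ := h4
  obtain ⟨h5a, h5b⟩ := h5
  simp only [T0m, T1m, s0m_invol, s1m_invol, braidm,
    s0m_apply0, s0m_apply1, s1m_apply0, s1m_apply1, sub_sub_cancel]
  exact corem t0 u0 t (x ⟨0, by omega⟩) (x ⟨1, by omega⟩) (f x) (f (s0m n hn x))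
    (f (s1m n hn x)) (f (s1m n hn (s0m n hn x))) (f (s0m n hn (s1m n hn x)))
    (f (s0m n hn (s1m n hn (s0m n hn x)))) (f (s1m n hn (s0m n hn (s1m n hn x))))
    (f (s1m n hn (s0m n hn (s1m n hn (s0m n hn x))))) h0a h1a h2a h3a
    (sub_ne_zero.mpr h0b) (sub_ne_zero.mpr h1b) (sub_ne_zero.mpr h2b)
    (sub_ne_zero.mpr h3b) (sub_ne_zero.mpr h4b) (sub_ne_zero.mpr h5b)
end
end

section
/- In an algebra with generators satisfying Tᵢ² = 1 for i ∈ [1,n-1], the braid relations among T₁,...,Tₙ of type Cₙ, and the deformed braid relation TₙT_{n-1}TₙT_{n-1} + tTₙT_{n-1} = T_{n-1}TₙT_{n-1}Tₙ + tT_{n-1}Tₙ, the elements Ξ_{1,n} = T₁⋯T_{n-1}TₙT_{n-1}⋯T₁ and T_{1,j} = T₁⋯T_{j-1}⋯T₁ satisfy Ξ_{1,n}T_{1,j}Ξ_{1,n}T_{1,j} + tΞ_{1,n}T_{1,j} = T_{1,j}Ξ_{1,n}T_{1,j}Ξ_{1,n} + tT_{1,j}Ξ_{1,n} for every j ∈ [2,n].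 -/
noncomputable section

/-- T₁ T₂ ⋯ T_{j-1}. -/
def upProd {A : Type*} [Ring A] (T : ℕ → A) (j : ℕ) : A :=
  ((List.range' 1 (j - 1)).map T).prod

/-- T_j T_{j-1} ⋯ T₁. -/
def downProd {A : Type*} [Ring A] (T : ℕ → A) (j : ℕ) : A :=
  (((List.range' 1 j).map T).reverse).prod

/-- T_{1,j} = T₁ ⋯ T_{j-2} T_{j-1} T_{j-2} ⋯ T₁. -/
def T1j {A : Type*} [Ring A] (T : ℕ → A) (j : ℕ) : A :=
  upProd T j * downProd T (j - 2)

/-- Ξ_{1,n} = T₁ ⋯ T_{n-1} Tₙ T_{n-1} ⋯ T₁. -/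
def XiElt {A : Type*} [Ring A] (T : ℕ → A) (n : ℕ) : A :=
  upProd T n * T n * downProd T (n - 1)

namespace Stmt13Aux

variable {A : Type*} [Ring A]

lemma lcomm {a b : A} (h : a * b = b * a) : ∀ z : A, a * (b * z) = b * (a * z) := by
  intro z; rw [← mul_assoc, h, mul_assoc]

lemma lsq {a : A} (h : a * a = 1) : ∀ z : A, a * (a * z) = z := by
  intro z; rw [← mul_assoc, h, one_mul]

lemma lbraid {a b : A} (h : a * b * a = b * a * b) :
    ∀ z : A, b * (a * (b * z)) = a * (b * (a * z)) := by
  intro z; rw [← mul_assoc, ← mul_assoc, ← h, mul_assoc, mul_assoc]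

variable (T : ℕ → A)

def uu (m : ℕ) : A := ((List.range' 1 m).map T).prod
def dP (m : ℕ) : A := (((List.range' 1 m).map T).reverse).prod

lemma uu_succ (m : ℕ) : uu T (m + 1) = uu T m * T (m + 1) := by
  unfold uu; rw [List.range'_1_concat]; simp [Nat.add_comm]

lemma dP_succ (m : ℕ) : dP T (m + 1) = T (m + 1) * dP T m := by
  unfold dP; rw [List.range'_1_concat]; simp [Nat.add_comm]

lemma uu_zero : uu T 0 = 1 := rfl
lemma dP_zero : dP T 0 = 1 := rfl

section withHyps

variable (n : ℕ)
variable (hT2 : ∀ i, 1 ≤ i → i ≤ n - 1 → T i * T i = 1)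
variable (hbraid : ∀ i, 1 ≤ i → i + 1 ≤ n - 1 →
      T i * T (i + 1) * T i = T (i + 1) * T i * T (i + 1))
variable (hTcomm : ∀ i j, 1 ≤ i → i + 2 ≤ j → j ≤ n → T i * T j = T j * T i)

include hTcomm in
lemma comm_u : ∀ m i, m + 2 ≤ i → i ≤ n → T i * uu T m = uu T m * T i := by
  intro m
  induction m with
  | zero => intro i _ _; simp [uu_zero]
  | succ m ih =>
    intro i h1 h2
    rw [uu_succ, ← mul_assoc, ih i (by omega) h2, mul_assoc,
      ← hTcomm (m+1) i (by omega) (by omega) h2, ← mul_assoc]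

include hTcomm in
lemma comm_d : ∀ m i, m + 2 ≤ i → i ≤ n → T i * dP T m = dP T m * T i := by
  intro m
  induction m with
  | zero => intro i _ _; simp [dP_zero]
  | succ m ih =>
    intro i h1 h2
    rw [dP_succ, ← mul_assoc, ← hTcomm (m+1) i (by omega) (by omega) h2, mul_assoc,
      ih i (by omega) h2, ← mul_assoc]

include hbraid hTcomm in
lemma shift_u : ∀ m k, 1 ≤ k → k + 1 ≤ m → m ≤ n - 1 →
    T (k + 1) * uu T m = uu T m * T k := by
  intro m
  induction m with
  | zero => intro k _ h _; omega
  | succ m ih =>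
    intro k hk h1 h2
    rcases Nat.lt_or_ge (k + 1) (m + 1) with h | h
    · rw [uu_succ, ← mul_assoc, ih k hk (by omega) (by omega), mul_assoc,
        hTcomm k (m+1) hk (by omega) (by omega), ← mul_assoc]
    · obtain ⟨k', rfl⟩ : ∃ k', k = k' + 1 := ⟨k - 1, by omega⟩
      have hm : m = k' + 1 := by omega
      subst hm
      simp only [uu_succ, mul_assoc]
      rw [lcomm (comm_u T n hTcomm k' (k'+2) le_rfl (by omega))]
      congr 1
      rw [← mul_assoc, ← mul_assoc]
      exact (hbraid (k'+1) (by omega) (by omega)).symm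

include hT2 in
lemma inv_ud : ∀ m, m ≤ n - 1 → uu T m * dP T m = 1 ∧ dP T m * uu T m = 1 := by
  intro m
  induction m with
  | zero => intro _; simp [uu_zero, dP_zero]
  | succ m ih =>
    intro h
    obtain ⟨h1, h2⟩ := ih (by omega)
    have hs := hT2 (m+1) (by omega) h
    constructor
    · rw [uu_succ, dP_succ, mul_assoc, ← mul_assoc (T (m+1)), hs, one_mul, h1]
    · rw [uu_succ, dP_succ, mul_assoc, ← mul_assoc (dP T m), h2, one_mul, hs]

include hT2 hbraid hTcomm in
lemma shift_d : ∀ m k, 1 ≤ k → k + 1 ≤ m → m ≤ n - 1 →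
    T k * dP T m = dP T m * T (k + 1) := by
  intro m k hk h1 h2
  obtain ⟨hud, hdu⟩ := inv_ud T n hT2 m h2
  have hs := shift_u T n hbraid hTcomm m k hk h1 h2
  calc T k * dP T m = (dP T m * uu T m) * (T k * dP T m) := by rw [hdu, one_mul]
    _ = dP T m * ((uu T m * T k) * dP T m) := by simp only [mul_assoc]
    _ = dP T m * ((T (k+1) * uu T m) * dP T m) := by rw [← hs]
    _ = dP T m * (T (k+1) * (uu T m * dP T m)) := by rw [mul_assoc]
    _ = dP T m * T (k + 1) := by rw [hud, mul_one]

include hT2 hbraid hTcomm in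
lemma comm_Xi (hn : 2 ≤ n) : ∀ k, 1 ≤ k → k + 1 ≤ n - 1 →
    T (k + 1) * XiElt T n = XiElt T n * T (k + 1) := by
  intro k hk h1
  show T (k+1) * (uu T (n-1) * T n * dP T (n-1)) = (uu T (n-1) * T n * dP T (n-1)) * T (k+1)
  simp only [mul_assoc]
  rw [← mul_assoc, shift_u T n hbraid hTcomm (n-1) k hk h1 le_rfl, mul_assoc,
    lcomm (hTcomm k n hk (by omega) le_rfl),
    shift_d T n hT2 hbraid hTcomm (n-1) k hk h1 le_rfl]

include hbraid hTcomm in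
lemma T1j_succ (k : ℕ) (h : k + 3 ≤ n) :
    T1j T (k + 3) = T (k + 2) * T1j T (k + 2) * T (k + 2) := by
  show uu T (k+2) * dP T (k+1) = T (k+2) * (uu T (k+1) * dP T k) * T (k+2)
  symm
  calc T (k+2) * (uu T (k+1) * dP T k) * T (k+2)
      = T (k+2) * (uu T k * (T (k+1) * (dP T k * T (k+2)))) := by
        simp only [uu_succ, mul_assoc]
    _ = T (k+2) * (uu T k * (T (k+1) * (T (k+2) * dP T k))) := by
        rw [comm_d T n hTcomm k (k+2) le_rfl (by omega)]
    _ = uu T k * (T (k+2) * (T (k+1) * (T (k+2) * dP T k))) := by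
        rw [lcomm (comm_u T n hTcomm k (k+2) le_rfl (by omega))]
    _ = uu T k * (T (k+1) * (T (k+2) * (T (k+1) * dP T k))) := by
        rw [lbraid (hbraid (k+1) (by omega) (by omega))]
    _ = uu T (k+2) * dP T (k+1) := by simp only [uu_succ, dP_succ, mul_assoc]

end withHyps

lemma conj_rel {A : Type*} [Ring A] [Algebra ℂ A] (t : ℂ) (c d x y : A)
    (_hcd : c * d = 1) (hdc : d * c = 1)
    (h : x * y * x * y + t • (x * y) = y * x * y * x + t • (y * x)) :
    c*x*d * (c*y*d) * (c*x*d) * (c*y*d) + t • (c*x*d * (c*y*d))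
      = c*y*d * (c*x*d) * (c*y*d) * (c*x*d) + t • (c*y*d * (c*x*d)) := by
  have key : ∀ a b : A, (c*a*d) * (c*b*d) = c*(a*b)*d := by
    intro a b
    calc (c*a*d) * (c*b*d) = c*(a*((d*c)*(b*d))) := by simp only [mul_assoc]
      _ = c*(a*(b*d)) := by rw [hdc, one_mul]
      _ = c*(a*b)*d := by simp only [mul_assoc]
  have expand : ∀ u v : A, c*u*d + t•(c*v*d) = c*(u + t•v)*d := by
    intro u v; rw [mul_add, add_mul, mul_smul_comm, smul_mul_assoc]
  calc c*x*d * (c*y*d) * (c*x*d) * (c*y*d) + t • (c*x*d * (c*y*d))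
      = (c*x*d * (c*y*d)) * ((c*x*d) * (c*y*d)) + t • (c*x*d * (c*y*d)) := by
        rw [mul_assoc (c*x*d * (c*y*d))]
    _ = c*((x*y)*(x*y))*d + t•(c*(x*y)*d) := by rw [key, key]
    _ = c*((x*y)*(x*y) + t•(x*y))*d := expand _ _
    _ = c*((y*x)*(y*x) + t•(y*x))*d := by
        rw [show (x*y)*(x*y) + t•(x*y) = x*y*x*y + t•(x*y) by rw [← mul_assoc], h,
          show y*x*y*x = (y*x)*(y*x) by rw [mul_assoc]]
    _ = c*((y*x)*(y*x))*d + t•(c*(y*x)*d) := (expand _ _).symm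
    _ = (c*y*d * (c*x*d)) * ((c*y*d) * (c*x*d)) + t • (c*y*d * (c*x*d)) := by
        rw [key, key]
    _ = c*y*d * (c*x*d) * (c*y*d) * (c*x*d) + t • (c*y*d * (c*x*d)) := by
        rw [mul_assoc (c*y*d * (c*x*d))]

lemma step_rel {A : Type*} [Ring A] [Algebra ℂ A] (t : ℂ) (s X Q : A)
    (hs : s * s = 1) (hc : s * X = X * s)
    (h : X*Q*X*Q + t•(X*Q) = Q*X*Q*X + t•(Q*X)) :
    X*(s*Q*s)*X*(s*Q*s) + t•(X*(s*Q*s)) = (s*Q*s)*X*(s*Q*s)*X + t•((s*Q*s)*X) := by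
  have hX : s*X*s = X := by rw [hc, mul_assoc, hs, mul_one]
  have h2 := conj_rel t s s X Q hs hs h
  rw [hX] at h2
  exact h2

end Stmt13Aux

open Stmt13Aux in
/-- Deformed braid-type relations between Ξ_{1,n} and T_{1,j}. -/
theorem stmt13 {A : Type*} [Ring A] [Algebra ℂ A] (n : ℕ) (hn : 2 ≤ n)
    (t : ℂ) (T : ℕ → A)
    (hT2 : ∀ i, 1 ≤ i → i ≤ n - 1 → T i * T i = 1)
    (hbraid : ∀ i, 1 ≤ i → i + 1 ≤ n - 1 →
      T i * T (i + 1) * T i = T (i + 1) * T i * T (i + 1))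
    (hTcomm : ∀ i j, 1 ≤ i → i + 2 ≤ j → j ≤ n → T i * T j = T j * T i)
    (hdef : T n * T (n - 1) * T n * T (n - 1) + t • (T n * T (n - 1))
      = T (n - 1) * T n * T (n - 1) * T n + t • (T (n - 1) * T n)) :
    ∀ j, 2 ≤ j → j ≤ n →
      XiElt T n * T1j T j * XiElt T n * T1j T j + t • (XiElt T n * T1j T j)
        = T1j T j * XiElt T n * T1j T j * XiElt T n + t • (T1j T j * XiElt T n) := by
  -- base case j = n
  have base : XiElt T n * T1j T n * XiElt T n * T1j T n + t • (XiElt T n * T1j T n)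
      = T1j T n * XiElt T n * T1j T n * XiElt T n + t • (T1j T n * XiElt T n) := by
    obtain ⟨m, rfl⟩ : ∃ m, n = m + 2 := ⟨n - 2, by omega⟩
    obtain ⟨hud, hdu⟩ := inv_ud T (m+2) hT2 (m+1) (by omega)
    have hXi : XiElt T (m+2) = uu T (m+1) * T (m+2) * dP T (m+1) := rfl
    have hP : T1j T (m+2) = uu T (m+1) * T (m+1) * dP T (m+1) := by
      show uu T (m+1) * dP T m = _
      rw [dP_succ, ← mul_assoc]
      rw [mul_assoc (uu T (m+1)), hT2 (m+1) (by omega) (by omega), mul_one]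
    have hdef' : T (m+2) * T (m+1) * T (m+2) * T (m+1) + t • (T (m+2) * T (m+1))
        = T (m+1) * T (m+2) * T (m+1) * T (m+2) + t • (T (m+1) * T (m+2)) := hdef
    have h2 := conj_rel t (uu T (m+1)) (dP T (m+1)) (T (m+2)) (T (m+1)) hud hdu hdef'
    rw [← hXi, ← hP] at h2
    exact h2
  -- descending step
  have stepl : ∀ j, 2 ≤ j → j + 1 ≤ n →
      (XiElt T n * T1j T (j+1) * XiElt T n * T1j T (j+1) + t • (XiElt T n * T1j T (j+1))
        = T1j T (j+1) * XiElt T n * T1j T (j+1) * XiElt T n + t • (T1j T (j+1) * XiElt T n)) →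
      (XiElt T n * T1j T j * XiElt T n * T1j T j + t • (XiElt T n * T1j T j)
        = T1j T j * XiElt T n * T1j T j * XiElt T n + t • (T1j T j * XiElt T n)) := by
    intro j hj2 hj1 h
    obtain ⟨k, rfl⟩ : ∃ k, j = k + 2 := ⟨j - 2, by omega⟩
    have hs : T (k+2) * T (k+2) = 1 := hT2 (k+2) (by omega) (by omega)
    have hQ : T1j T (k+2) = T (k+2) * T1j T (k+3) * T (k+2) := by
      rw [T1j_succ T n hbraid hTcomm k (by omega)]
      calc T1j T (k+2)
          = T (k+2) * (T (k+2) * (T1j T (k+2) * (T (k+2) * T (k+2)))) := by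
            rw [hs, mul_one, lsq hs]
        _ = T (k+2) * (T (k+2) * T1j T (k+2) * T (k+2)) * T (k+2) := by
            simp only [mul_assoc]
    have hcX : T (k+2) * XiElt T n = XiElt T n * T (k+2) :=
      comm_Xi T n hT2 hbraid hTcomm hn (k+1) (by omega) (by omega)
    rw [hQ]
    exact step_rel t (T (k+2)) (XiElt T n) (T1j T (k+3)) hs hcX h
  -- descending induction
  intro j hj2 hjn
  obtain ⟨p, hp⟩ : ∃ p, j + p = n := ⟨n - j, by omega⟩
  induction p generalizing j with
  | zero => have : j = n := by omega
            subst this; exact base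
  | succ p ih =>
    exact stepl j hj2 (by omega) (ih (j+1) (by omega) (by omega) (by omega))
end
end
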